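/- Let χ be a Dirichlet character mod N, M a positive integer, and χ_M the Dirichlet character mod MN defined by χ. Let ι_old : ρ_{χ_M} → T_M ρ_χ be the inclusion 𝔢_γ ↦ M^{−k/2} \overline{χ}(I_{I₂}(I_{m_M}(γ))) 𝔢_{I_{m_M}(γ)} ⊗ 𝔢_{m_M·γ}, and π_old its adjoint projection. Then for every f ∈ M_k(χ) and every v ∈ V(ρ_{χ_M}): ⟨Ind(sc_M f), v⟩ = ⟨π_old(T_M Ind f), v⟩ = ⟨T_M Ind f, ι_old(v)⟩, where (sc_M f)(τ) = f(Mτ) is the oldform map and Ind(sc_M f) is formed with respect to Γ₀(MN) and χ_M. -/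

import Mathlib

open scoped MatrixGroups Manifold Kronecker ComplexConjugate Classical ComplexOrder
open Matrix UpperHalfPlane Complex Filter MeasureTheory CongruenceSubgroup

noncomputable section

namespace VVMF

abbrev GL2ℤ := Matrix (Fin 2) (Fin 2) ℤ

/-- The automorphy factor `c τ + d` for `γ ∈ SL(2,ℤ)`. -/
def denomZ (γ : SL(2, ℤ)) (τ : ℍ) : ℂ :=
  ((γ 1 0 : ℤ) : ℂ) * (τ : ℂ) + ((γ 1 1 : ℤ) : ℂ)

/-- `ρ` is a (matrix) representation of `SL(2,ℤ)`. -/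
def IsRep {ι : Type*} [Fintype ι] (ρ : SL(2, ℤ) → Matrix ι ι ℂ) : Prop :=
  ρ 1 = 1 ∧ ∀ γ δ : SL(2, ℤ), ρ (γ * δ) = ρ γ * ρ δ

/-- The weight-`k` slash action `f ∣_{k,ρ} γ` on vector-valued functions. -/
def vslash {ι : Type*} [Fintype ι] (k : ℤ) (ρ : SL(2, ℤ) → Matrix ι ι ℂ)
    (γ : SL(2, ℤ)) (f : ℍ → ι → ℂ) : ℍ → ι → ℂ :=
  fun τ => (denomZ γ τ) ^ (-k) • (ρ γ⁻¹).mulVec (f (γ • τ))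

/-- Vector-valued modular form of weight `k` and type `ρ`: holomorphic,
slash-invariant, with all components (equivalently, all functionals) bounded
towards `i∞`. -/
def IsVModForm {ι : Type*} [Fintype ι] (k : ℤ) (ρ : SL(2, ℤ) → Matrix ι ι ℂ)
    (f : ℍ → ι → ℂ) : Prop :=
  (∀ i, MDifferentiable 𝓘(ℂ) 𝓘(ℂ) (fun τ : ℍ => f τ i)) ∧
  (∀ γ : SL(2, ℤ), vslash k ρ γ f = f) ∧
  (∀ i, IsBoundedAtImInfty (fun τ : ℍ => f τ i))

/-- Vector-valued cusp form. -/
def IsVCuspForm {ι : Type*} [Fintype ι] (k : ℤ) (ρ : SL(2, ℤ) → Matrix ι ι ℂ)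
    (f : ℍ → ι → ℂ) : Prop :=
  (∀ i, MDifferentiable 𝓘(ℂ) 𝓘(ℂ) (fun τ : ℍ => f τ i)) ∧
  (∀ γ : SL(2, ℤ), vslash k ρ γ f = f) ∧
  (∀ i, IsZeroAtImInfty (fun τ : ℍ => f τ i))

/-- The space `M_k(ρ)` of modular forms of weight `k` and type `ρ`. -/
def Mk {ι : Type*} [Fintype ι] (k : ℤ) (ρ : SL(2, ℤ) → Matrix ι ι ℂ) :
    Set (ℍ → ι → ℂ) := {f | IsVModForm k ρ f}

/-- The trivial one-dimensional representation `𝟙` of `SL(2,ℤ)`. -/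
def oneRep : SL(2, ℤ) → Matrix Unit Unit ℂ := fun _ => 1

/-- The scalar slash action on ℂ-valued functions. -/
def cslash (k : ℤ) (γ : SL(2, ℤ)) (f : ℍ → ℂ) : ℍ → ℂ :=
  fun τ => (denomZ γ τ) ^ (-k) * f (γ • τ)

/-- A Dirichlet character mod `N` evaluated on the lower right entry `d(γ)`. -/
def dirSL {N : ℕ} (χ : DirichletCharacter ℂ N) (γ : SL(2, ℤ)) : ℂ :=
  χ (((γ 1 1 : ℤ) : ZMod N))

/-- Classical modular form of weight `k` for `Γ₀(N)` and Dirichlet character `χ`. -/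
def IsModFormChi {N : ℕ} (k : ℤ) (χ : DirichletCharacter ℂ N) (f : ℍ → ℂ) : Prop :=
  MDifferentiable 𝓘(ℂ) 𝓘(ℂ) f ∧
  (∀ γ ∈ Gamma0 N, (fun τ => dirSL χ γ⁻¹ * cslash k γ f τ) = f) ∧
  (∀ γ : SL(2, ℤ), IsBoundedAtImInfty (cslash k γ f))

/-- Classical cusp form of weight `k` for `Γ₀(N)` and Dirichlet character `χ`. -/
def IsCuspFormChi {N : ℕ} (k : ℤ) (χ : DirichletCharacter ℂ N) (f : ℍ → ℂ) : Prop :=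
  MDifferentiable 𝓘(ℂ) 𝓘(ℂ) f ∧
  (∀ γ ∈ Gamma0 N, (fun τ => dirSL χ γ⁻¹ * cslash k γ f τ) = f) ∧
  (∀ γ : SL(2, ℤ), IsZeroAtImInfty (cslash k γ f))

/-! ### The sets `Δ_M` and vector-valued Hecke operators -/

/-- Membership in `Δ_M`: upper triangular, positive diagonal (automatic for `M > 0`),
determinant `M`, and `0 ≤ b < d`. -/
def DeltaPred (M : ℕ) (m : GL2ℤ) : Prop :=
  m 1 0 = 0 ∧ 0 < m 0 0 ∧ m 0 0 * m 1 1 = (M : ℤ) ∧ 0 ≤ m 0 1 ∧ m 0 1 < m 1 1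

/-- The set `Δ_M` of upper triangular matrices `(a b; 0 d)`, `a d = M`, `0 ≤ b < d`. -/
def Delta (M : ℕ) : Type := {m : GL2ℤ // DeltaPred M m}

instance (M : ℕ) : Finite (Delta M) := by
  have key : ∀ m : Delta M, m.1 0 0 ≤ (M : ℤ) ∧ m.1 0 1 ≤ (M : ℤ) ∧ m.1 1 1 ≤ (M : ℤ) := by
    rintro ⟨m, hc, ha, hdet, hb0, hbd⟩
    have hd : 1 ≤ m 1 1 := by nlinarith
    have ha' : 1 ≤ m 0 0 := ha
    refine ⟨?_, ?_, ?_⟩ <;> nlinarith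
  refine Finite.of_injective
    (fun m : Delta M => ((⟨(m.1 0 0).toNat, ?_⟩ : Fin (M+1)), (⟨(m.1 0 1).toNat, ?_⟩ : Fin (M+1)),
      (⟨(m.1 1 1).toNat, ?_⟩ : Fin (M+1)))) ?_
  · have := key m; omega
  · have := key m; omega
  · have := key m; omega
  · intro m m' h
    have h1 := congrArg (fun p => (p.1 : Fin (M+1)).val) h
    have h2 := congrArg (fun p => (p.2.1 : Fin (M+1)).val) h
    have h3 := congrArg (fun p => (p.2.2 : Fin (M+1)).val) h
    simp only at h1 h2 h3
    have e1 : m.1 0 0 = m'.1 0 0 := by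
      have p1 := m.2.2.1; have p2 := m'.2.2.1
      omega
    have e2 : m.1 0 1 = m'.1 0 1 := by
      have p1 := m.2.2.2.2.1; have p2 := m'.2.2.2.2.1
      omega
    have e3 : m.1 1 1 = m'.1 1 1 := by
      have p1 := m.2.2.2.2.1; have p2 := m'.2.2.2.2.1
      have q1 := m.2.2.2.2.2; have q2 := m'.2.2.2.2.2
      omega
    apply Subtype.ext
    ext i j
    fin_cases i <;> fin_cases j
    · exact e1
    · exact e2
    · show m.1 1 0 = m'.1 1 0
      rw [m.2.1, m'.2.1]
    · exact e3

instance (M : ℕ) : Fintype (Delta M) := Fintype.ofFinite _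

/-- `HeckeData M bar coc` asserts that for every `m ∈ Δ_M` and `γ ∈ SL(2,ℤ)` we have
`m γ = I_m(γ) · overline{m γ}` with `overline{m γ} = bar m γ ∈ Δ_M` and
`I_m(γ) = coc m γ ∈ SL(2,ℤ)`. -/
def HeckeData (M : ℕ) (bar : Delta M → SL(2, ℤ) → Delta M)
    (coc : Delta M → SL(2, ℤ) → SL(2, ℤ)) : Prop :=
  ∀ (m : Delta M) (γ : SL(2, ℤ)),
    ((coc m γ : SL(2, ℤ)) : GL2ℤ) * (bar m γ).1 = m.1 * (γ : GL2ℤ)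

/-- The representation `T_M ρ` on `V(ρ) ⊗ ℂ[Δ_M]` (coordinates `ι × Δ_M`):
`(T_M ρ)(γ) (v ⊗ 𝔢_m) = ρ(I_m(γ⁻¹)⁻¹) v ⊗ 𝔢_{m·γ⁻¹}`. -/
def heckeRep {ι : Type*} (M : ℕ) (ρ : SL(2, ℤ) → Matrix ι ι ℂ)
    (bar : Delta M → SL(2, ℤ) → Delta M) (coc : Delta M → SL(2, ℤ) → SL(2, ℤ)) :
    SL(2, ℤ) → Matrix (ι × Delta M) (ι × Delta M) ℂ :=
  fun γ p q => if p.2 = bar q.2 γ⁻¹ then ρ ((coc q.2 γ⁻¹)⁻¹) p.1 q.1 else 0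

/-- Möbius action of an upper triangular integer matrix `(a b; 0 d)` (with
`(aτ+b)/d ∈ ℍ`, as is the case for `m ∈ Δ_M`) on `ℍ`. -/
def utAct (m : GL2ℤ) (τ : ℍ) : ℍ :=
  if h : 0 < ((((m 0 0 : ℤ) : ℂ) * (τ : ℂ) + ((m 0 1 : ℤ) : ℂ)) / ((m 1 1 : ℤ) : ℂ)).im
  then ⟨_, h⟩ else τ

/-- The slash `(f ∣_k m)(τ) = (a/d)^{k/2} f((aτ+b)/d)` for `m = (a b; 0 d)`. -/
def mslash {ι : Type*} (k : ℤ) (m : GL2ℤ) (f : ℍ → ι → ℂ) : ℍ → ι → ℂ :=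
  fun τ => (((((m 0 0 : ℤ) : ℝ) / ((m 1 1 : ℤ) : ℝ)) ^ ((k : ℝ) / 2) : ℝ) : ℂ) • f (utAct m τ)

/-- The vector-valued Hecke operator on forms:
`T_M f = ∑_{m ∈ Δ_M} (f ∣_k m) ⊗ 𝔢_m`. -/
def heckeT {ι : Type*} (M : ℕ) (k : ℤ) (f : ℍ → ι → ℂ) : ℍ → (ι × Delta M) → ℂ :=
  fun τ p => mslash k p.2.1 f τ p.1

/-- Tensor product of vector-valued functions, `(f ⊗ g)(τ) = f(τ) ⊗ g(τ)`. -/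
def tensorF {α β : Type*} (f : ℍ → α → ℂ) (g : ℍ → β → ℂ) : ℍ → α × β → ℂ :=
  fun τ p => f τ p.1 * g τ p.2

/-! ### Right cosets and induced representations -/

/-- The set of right cosets `Γ\SL(2,ℤ)`. -/
def Cos (Γ : Subgroup SL(2, ℤ)) : Type := Quotient (QuotientGroup.rightRel Γ)

/-- The coset `Γ γ`. -/
def mkCos (Γ : Subgroup SL(2, ℤ)) (γ : SL(2, ℤ)) : Cos Γ :=
  Quotient.mk (QuotientGroup.rightRel Γ) γ

/-- Right translation of right cosets: `Γγ ↦ Γγδ`. -/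
def cosMul (Γ : Subgroup SL(2, ℤ)) (c : Cos Γ) (δ : SL(2, ℤ)) : Cos Γ :=
  Quotient.map' (· * δ) (by
    intro a b h
    rw [QuotientGroup.rightRel_apply] at h ⊢
    simpa [mul_assoc] using h) c

/-- `IsSection Γ sec` says `sec` picks a representative in each right coset of `Γ`,
with the identity coset represented by `1` (i.e. `1 ∈ B`). -/
def IsSection (Γ : Subgroup SL(2, ℤ)) (sec : Cos Γ → SL(2, ℤ)) : Prop :=
  (∀ c, mkCos Γ (sec c) = c) ∧ sec (mkCos Γ 1) = 1

/-- The cocycle `I_β(δ) ∈ Γ` of the chosen system of representatives: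
`β δ = I_β(δ) · overline{β δ}`, extended to all of `SL(2,ℤ)` by `I_β = I_{overline β}`. -/
def indCoc (Γ : Subgroup SL(2, ℤ)) (sec : Cos Γ → SL(2, ℤ)) (c : Cos Γ)
    (δ : SL(2, ℤ)) : SL(2, ℤ) :=
  sec c * δ * (sec (cosMul Γ c δ))⁻¹

/-- The induced representation `Ind_Γ χ` on `ℂ[Γ\SL(2,ℤ)]`, for a character given as
a function `χf : SL(2,ℤ) → ℂ` (evaluated only on elements of `Γ`):
`(Ind_Γ χ)(γ) 𝔢_β = χ(I_β(γ⁻¹)⁻¹) 𝔢_{β·γ⁻¹}`. -/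
def indRep (Γ : Subgroup SL(2, ℤ)) (sec : Cos Γ → SL(2, ℤ)) (χf : SL(2, ℤ) → ℂ) :
    SL(2, ℤ) → Matrix (Cos Γ) (Cos Γ) ℂ :=
  fun γ c c' => if c = cosMul Γ c' γ⁻¹ then χf ((indCoc Γ sec c' γ⁻¹)⁻¹) else 0

/-- The induced representation `Ind_Γ 𝟙` (a permutation representation). -/
def permRep (Γ : Subgroup SL(2, ℤ)) : SL(2, ℤ) → Matrix (Cos Γ) (Cos Γ) ℂ :=
  fun γ c c' => if c = cosMul Γ c' γ⁻¹ then 1 else 0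

/-- The induction map on modular forms, `Ind f = ∑_γ (f ∣_k γ) 𝔢_γ`. -/
def indForm (Γ : Subgroup SL(2, ℤ)) (sec : Cos Γ → SL(2, ℤ)) (k : ℤ) (f : ℍ → ℂ) :
    ℍ → Cos Γ → ℂ :=
  fun τ c => cslash k (sec c) f τ

/-- The pointwise pairing `⟨f, v⟩ : τ ↦ ⟨f(τ), v⟩` with respect to the scalar
product making the standard basis orthonormal. -/
def pairF {α : Type*} [Fintype α] (f : ℍ → α → ℂ) (v : α → ℂ) : ℍ → ℂ :=
  fun τ => ∑ a, f τ a * conj (v a)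

/-! ### Eisenstein series -/

/-- The matrix `T = (1 1; 0 1)`. -/
def Tmat : SL(2, ℤ) := ⟨!![1, 1; 0, 1], by norm_num [Matrix.det_fin_two_of]⟩

/-- The relation whose classes are the right cosets `Γ_∞(v) γ` of
`Γ_∞(v) = {γ ∈ Γ_∞ : ρ(γ) v = v}`. -/
def eisRel {ι : Type*} [Fintype ι] (ρ : SL(2, ℤ) → Matrix ι ι ℂ) (v : ι → ℂ)
    (a b : SL(2, ℤ)) : Prop :=
  ((b * a⁻¹ : SL(2, ℤ)) 1 0 : ℤ) = 0 ∧ (ρ (b * a⁻¹)).mulVec v = v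

/-- The index `[Γ_∞ : Γ_∞(v)]`. -/
def eisIndex {ι : Type*} [Fintype ι] (ρ : SL(2, ℤ) → Matrix ι ι ℂ) (v : ι → ℂ) : ℕ :=
  Nat.card (Quotient (Relation.EqvGen.setoid
    (fun a b : {g : SL(2, ℤ) // (g 1 0 : ℤ) = 0} => eisRel ρ v a.1 b.1)))

/-- The Eisenstein series
`E_{k,v} = [Γ_∞ : Γ_∞(v)]⁻¹ ∑_{γ ∈ Γ_∞(v)\SL(2,ℤ)} v ∣_{k,ρ} γ` (for `k > 2`). -/
def eisSeries {ι : Type*} [Fintype ι] (k : ℤ) (ρ : SL(2, ℤ) → Matrix ι ι ℂ)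
    (v : ι → ℂ) : ℍ → ι → ℂ :=
  fun τ => ((eisIndex ρ v : ℂ))⁻¹ •
    ∑' c : Quotient (Relation.EqvGen.setoid (eisRel ρ v)),
      vslash k ρ (Quotient.out c) (fun _ => v) τ

/-- The Eisenstein series defined via the Hecke trick,
`E_{k,v} = [Γ_∞ : Γ_∞(v)]⁻¹ lim_{s→0} ∑_{γ ∈ Γ_∞(v)\SL(2,ℤ)} y^s v ∣_{k,ρ} γ`. -/
def eisSeriesH {ι : Type*} [Fintype ι] (k : ℤ) (ρ : SL(2, ℤ) → Matrix ι ι ℂ)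
    (v : ι → ℂ) : ℍ → ι → ℂ :=
  fun τ => limUnder (nhdsWithin (0 : ℝ) (Set.Ioi 0)) (fun s : ℝ =>
    ((eisIndex ρ v : ℂ))⁻¹ •
      ∑' c : Quotient (Relation.EqvGen.setoid (eisRel ρ v)),
        ((((Quotient.out c • τ : ℍ).im) ^ s : ℝ) : ℂ) •
          vslash k ρ (Quotient.out c) (fun _ => v) τ)

/-- The Eisenstein space `E_k(ρ) = span{E_{k,v} : v ∈ V(ρ)}` (for `k > 2`). -/
def Ek {ι : Type*} [Fintype ι] (k : ℤ) (ρ : SL(2, ℤ) → Matrix ι ι ℂ) :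
    Submodule ℂ (ℍ → ι → ℂ) :=
  Submodule.span ℂ {f | ∃ v : ι → ℂ, f = eisSeries k ρ v}

/-- The submodule of `SL(2,ℤ)`-invariant vectors (the isotrivial component `ρ(𝟙)`). -/
def invariants {ι : Type*} [Fintype ι] (ρ : SL(2, ℤ) → Matrix ι ι ℂ) :
    Submodule ℂ (ι → ℂ) where
  carrier := {v | ∀ γ, (ρ γ).mulVec v = v}
  add_mem' := by
    intro a b ha hb γ
    rw [Matrix.mulVec_add, ha, hb]
  zero_mem' := by
    intro γ
    simp [Matrix.mulVec_zero]
  smul_mem' := by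
    intro c a ha γ
    rw [Matrix.mulVec_smul, ha]

/-- The subspace `V(ρ)(1)_T = {v : ρ(T) v = v}` of `T`-fixed vectors. -/
def fixedT {ι : Type*} [Fintype ι] (ρ : SL(2, ℤ) → Matrix ι ι ℂ) :
    Submodule ℂ (ι → ℂ) where
  carrier := {v | (ρ Tmat).mulVec v = v}
  add_mem' := by
    intro a b ha hb
    show (ρ Tmat).mulVec _ = _
    rw [Matrix.mulVec_add, ha, hb]
  zero_mem' := by
    show (ρ Tmat).mulVec _ = _
    simp [Matrix.mulVec_zero]
  smul_mem' := by
    intro c a ha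
    show (ρ Tmat).mulVec _ = _
    rw [Matrix.mulVec_smul, ha]

/-! ### The hyperbolic measure and Petersson scalar products -/

instance : MeasurableSpace ℍ := borel ℍ

/-- The measure `dx dy` on `ℍ` (hyperbolic weights are carried by the integrands). -/
def μH : Measure ℍ := (MeasureTheory.volume : Measure ℂ).comap (fun τ : ℍ => (τ : ℂ))

/-- The standard (closed) fundamental domain of `SL(2,ℤ)\ℍ`. -/
def fdSL : Set ℍ := ModularGroup.fd

/-- The Petersson scalar product `⟨f, g⟩_ι` of vector-valued forms `f` of type `ρ` and
`g` of type `σ`, with respect to the embedding `ι : 𝟙 ↪ ρ ⊗ σ̄` with `ι(1) = u`: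
`∫_{SL(2,ℤ)\ℍ} ⟨(f ⊗ ḡ)(τ), ι(1)⟩ y^{k-2} dx dy`. -/
def petersson {α β : Type*} [Fintype α] [Fintype β] (k : ℤ) (u : α × β → ℂ)
    (f : ℍ → α → ℂ) (g : ℍ → β → ℂ) : ℂ :=
  ∫ τ in fdSL, (∑ a, ∑ b, f τ a * conj (g τ b) * conj (u (a, b))) *
    ((τ.im : ℂ)) ^ (k - 2) ∂μH

/-- The regularized Petersson scalar product (regularized as the limit of integrals
over truncations of the fundamental domain). -/
def peterssonReg {α β : Type*} [Fintype α] [Fintype β] (k : ℤ) (u : α × β → ℂ)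
    (f : ℍ → α → ℂ) (g : ℍ → β → ℂ) : ℂ :=
  limUnder Filter.atTop (fun t : ℝ =>
    ∫ τ in {τ ∈ fdSL | τ.im ≤ t}, (∑ a, ∑ b, f τ a * conj (g τ b) * conj (u (a, b))) *
      ((τ.im : ℂ)) ^ (k - 2) ∂μH)

/-- The canonical `ι(1) = ∑_w w ⊗ w̄` for forms of the same type. -/
def diagPair (α : Type*) : α × α → ℂ := fun p => if p.1 = p.2 then 1 else 0

/-- A fundamental domain for `Γ\ℍ` obtained from coset representatives. -/
def fdGamma (Γ : Subgroup SL(2, ℤ)) (sec : Cos Γ → SL(2, ℤ)) : Set ℍ :=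
  ⋃ c : Cos Γ, (fun τ => sec c • τ) '' fdSL

/-- The normalized Petersson scalar product of two classical modular forms for `Γ`:
`[SL(2,ℤ):Γ]⁻¹ ∫_{Γ\ℍ} f(τ) conj(g(τ)) y^{k-2} dx dy`. -/
def peterssonGamma (k : ℤ) (Γ : Subgroup SL(2, ℤ)) (sec : Cos Γ → SL(2, ℤ))
    (f g : ℍ → ℂ) : ℂ :=
  ((Γ.index : ℂ))⁻¹ *
    ∫ τ in fdGamma Γ sec, f τ * conj (g τ) * ((τ.im : ℂ)) ^ (k - 2) ∂μH

/-! ### Kernels, finite index, instances -/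

/-- The kernel of a representation. -/
def repKer {ι : Type*} [Fintype ι] (ρ : SL(2, ℤ) → Matrix ι ι ℂ) (hρ : IsRep ρ) :
    Subgroup SL(2, ℤ) where
  carrier := {γ | ρ γ = 1}
  one_mem' := hρ.1
  mul_mem' := by
    intro a b ha hb
    show ρ (_ * _) = 1
    rw [hρ.2, ha, hb, one_mul]
  inv_mem' := by
    intro a ha
    show ρ _⁻¹ = 1
    have h2 := hρ.2 a⁻¹ a
    rw [inv_mul_cancel, hρ.1, ha, mul_one] at h2
    exact h2.symm

instance (Γ : Subgroup SL(2, ℤ)) [Γ.FiniteIndex] : Finite (Cos Γ) :=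
  Finite.of_equiv _ (QuotientGroup.quotientRightRelEquivQuotientLeftRel Γ).symm

instance (Γ : Subgroup SL(2, ℤ)) [Γ.FiniteIndex] : Fintype (Cos Γ) := Fintype.ofFinite _

instance (N : ℕ) [NeZero N] : (CongruenceSubgroup.Gamma N).FiniteIndex := by
  haveI : Finite (Matrix.SpecialLinearGroup (Fin 2) (ZMod N)) := Subtype.finite
  have : (CongruenceSubgroup.Gamma N) = (Matrix.SpecialLinearGroup.map (Int.castRingHom (ZMod N))).ker := rfl
  rw [this]
  infer_instance

instance (N : ℕ) [NeZero N] : (Gamma0 N).FiniteIndex := by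
  refine Subgroup.finiteIndex_of_le (H := CongruenceSubgroup.Gamma N) ?_
  intro γ hγ
  rw [Gamma_mem] at hγ
  rw [Gamma0_mem]
  exact hγ.2.2.1

instance (N : ℕ) [NeZero N] : (Gamma1 N).FiniteIndex := by
  refine Subgroup.finiteIndex_of_le (H := CongruenceSubgroup.Gamma N) ?_
  intro γ hγ
  rw [Gamma_mem] at hγ
  rw [Gamma1_mem]
  exact ⟨hγ.1, hγ.2.2.2, hγ.2.2.1⟩

/-- A sesquilinear scalar product on `ι → ℂ` with Gram matrix `B`:
`⟨v, w⟩_B = ∑_{i,j} conj(w i) B i j v j`. -/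
def sesq {ι : Type*} [Fintype ι] (B : Matrix ι ι ℂ) (v w : ι → ℂ) : ℂ :=
  ∑ i, ∑ j, conj (w i) * B i j * v j

/-- The scalar product `⟨v ⊗ 𝔢_m, w ⊗ 𝔢_{m'}⟩ = δ_{m,m'} ⟨v,w⟩_B` on `V(ρ) ⊗ ℂ[Δ_M]`. -/
def blockDiagGram {ι : Type*} (M : ℕ) (B : Matrix ι ι ℂ) :
    Matrix (ι × Delta M) (ι × Delta M) ℂ :=
  Matrix.of fun p q => if p.2 = q.2 then B p.1 q.1 else 0

/-- The inclusion `𝟙 → T_M 𝟙`, `c ↦ c ∑_{m ∈ Δ_M} 𝔢_m`. -/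
def oneIncl (M : ℕ) : Matrix (Unit × Delta M) Unit ℂ :=
  Matrix.of fun _ _ => 1

/-- `T_M φ` for a homomorphism (intertwining matrix) `φ : ρ → σ`:
`v ⊗ 𝔢_m ↦ φ(v) ⊗ 𝔢_m`. -/
def heckeHom {ι κ : Type*} (M : ℕ) (φ : Matrix κ ι ℂ) :
    Matrix (κ × Delta M) (ι × Delta M) ℂ :=
  fun p q => if p.2 = q.2 then φ p.1 q.1 else 0

/-- The surjection `(T_M ρ) ⊗ (T_M σ) → T_M (ρ ⊗ σ)`:
`(v ⊗ 𝔢_m) ⊗ (w ⊗ 𝔢_{m'}) ↦ δ_{m,m'} (v ⊗ w) ⊗ 𝔢_m`. -/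
def heckeTenProj (ι κ : Type*) (M : ℕ) :
    Matrix ((ι × κ) × Delta M) ((ι × Delta M) × (κ × Delta M)) ℂ :=
  fun p q => if p.1.1 = q.1.1 ∧ p.1.2 = q.2.1 ∧ p.2 = q.1.2 ∧ q.1.2 = q.2.2 then 1 else 0

/-! ### Classical operators, special matrices, and intertwining inclusions -/

set_option linter.unnecessarySeqFocus false

/-- The scalar slash `(f ∣_k m)(τ) = (a/d)^{k/2} f((aτ+b)/d)` for `m = (a b; 0 d)`. -/
def cmslash (k : ℤ) (m : GL2ℤ) (f : ℍ → ℂ) : ℍ → ℂ :=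
  fun τ => (((((m 0 0 : ℤ) : ℝ) / ((m 1 1 : ℤ) : ℝ)) ^ ((k : ℝ) / 2) : ℝ) : ℂ) *
    f (utAct m τ)

/-- `𝔢_γ`, the standard basis vector of `ℂ[Γ\SL(2,ℤ)]` at the coset `Γγ`. -/
def eCos (Γ : Subgroup SL(2, ℤ)) (γ : SL(2, ℤ)) : Cos Γ → ℂ :=
  fun c => if c = mkCos Γ γ then 1 else 0

/-- The matrix `m_M = diag(M, 1) ∈ Δ_M`. -/
def mMat (M : ℕ) (hM : 0 < M) : Delta M :=
  ⟨!![(M : ℤ), 0; 0, 1], by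
    refine ⟨?_, ?_, ?_, ?_, ?_⟩ <;> simp <;> omega⟩

/-- The matrix `m'_M = diag(1, M) ∈ Δ_M`. -/
def mMat' (M : ℕ) (hM : 0 < M) : Delta M :=
  ⟨!![1, 0; 0, (M : ℤ)], by
    refine ⟨?_, ?_, ?_, ?_, ?_⟩ <;> simp <;> omega⟩

/-- The matrix `m_{M,b} = (M b; 0 M) ∈ Δ_{M²}` for `0 ≤ b < M`. -/
def mMatB (M : ℕ) (b : Fin M) : Delta (M * M) :=
  ⟨!![(M : ℤ), (b : ℤ); 0, (M : ℤ)], by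
    have hb := b.2
    refine ⟨?_, ?_, ?_, ?_, ?_⟩ <;> simp <;> omega⟩

/-- The matrix `diag(M, M) ∈ Δ_{M²}`. -/
def mMatMM (M : ℕ) (hM : 0 < M) : Delta (M * M) :=
  ⟨!![(M : ℤ), 0; 0, (M : ℤ)], by
    refine ⟨?_, ?_, ?_, ?_, ?_⟩ <;> simp <;> omega⟩

/-- Rescaling `({\rm sc}_M f)(τ) = f(M τ)`. -/
def scMul (M : ℕ) (f : ℍ → ℂ) : ℍ → ℂ := fun τ => f (utAct !![(M : ℤ), 0; 0, 1] τ)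

/-- Rescaling `({\rm sc}_{1/M} f)(τ) = f(τ / M)`. -/
def scDiv (M : ℕ) (f : ℍ → ℂ) : ℍ → ℂ := fun τ => f (utAct !![1, 0; 0, (M : ℤ)] τ)

/-- The classical Hecke operator
`(f ∣_{k,χ} T_M)(τ) = M^{k-1} ∑_{d ∣ M, 0 ≤ b < d} d^{-k} conj(χ(d)) f((M d⁻¹ τ + b)/d)`. -/
def classicalHecke {N : ℕ} (M : ℕ) (k : ℤ) (χ : DirichletCharacter ℂ N)
    (f : ℍ → ℂ) : ℍ → ℂ :=
  fun τ => (M : ℂ) ^ (k - 1) *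
    ∑ d ∈ M.divisors, ∑ b ∈ Finset.range d,
      ((d : ℂ)) ^ (-k) * conj (χ ((d : ℕ) : ZMod N)) *
        f (utAct !![((M / d : ℕ) : ℤ), (b : ℤ); 0, ((d : ℕ) : ℤ)] τ)

/-- `e_M(x) = exp(2πi x/M)`. -/
def eM (M : ℕ) (x : ℤ) : ℂ := Complex.exp (2 * Real.pi * Complex.I * x / M)

/-- The Gauss sum `G(ε, e_M(b)) = ∑_{a mod M} ε(a) e_M(a b)`. -/
def gaussSumE {M : ℕ} (ε : DirichletCharacter ℂ M) (b : ℤ) : ℂ :=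
  ∑ a ∈ Finset.range M, ε ((a : ℕ) : ZMod M) * eM M ((a : ℤ) * b)

/-- The value `χ(I_{I₂}(δ))` of a Dirichlet character mod `N` on the cocycle
`I_{I₂}(δ) ∈ Γ₀(N)`. -/
def cocVal {N : ℕ} (χ : DirichletCharacter ℂ N) (sec : Cos (Gamma0 N) → SL(2, ℤ))
    (δ : SL(2, ℤ)) : ℂ :=
  dirSL χ (indCoc (Gamma0 N) sec (mkCos (Gamma0 N) 1) δ)

/-- The inclusion `ι_Hecke : ρ_χ → T_M ρ_χ`,
`𝔢_γ ↦ M^{k/2-1} ∑_{m ∈ Δ_M} χ(m) conj(χ(I_{I₂}(I_m(γ)))) 𝔢_{I_m(γ)} ⊗ 𝔢_{m·γ}`. -/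
def iotaHecke {N : ℕ} (M : ℕ) (k : ℤ) (χ : DirichletCharacter ℂ N)
    (sec : Cos (Gamma0 N) → SL(2, ℤ))
    (bar : Delta M → SL(2, ℤ) → Delta M) (coc : Delta M → SL(2, ℤ) → SL(2, ℤ)) :
    Matrix (Cos (Gamma0 N) × Delta M) (Cos (Gamma0 N)) ℂ :=
  Matrix.of fun p c =>
    ((((M : ℝ) ^ ((k : ℝ) / 2 - 1) : ℝ)) : ℂ) *
      ∑ m : Delta M,
        if p.2 = bar m (sec c) ∧ p.1 = mkCos (Gamma0 N) (coc m (sec c)) then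
          χ ((m.1 1 1 : ℤ) : ZMod N) * conj (cocVal χ sec (coc m (sec c)))
        else 0

/-- The inclusion `ι_AL : ρ_{χ'} → T_M ρ_χ`,
`𝔢_γ ↦ conj(χ(I_{I₂}(γ_{M,N} I_{m_M}(γ)))) 𝔢_{γ_{M,N} I_{m_M}(γ)} ⊗ 𝔢_{m_M·γ}`. -/
def iotaAL {N : ℕ} (M : ℕ) (hM : 0 < M) (χ : DirichletCharacter ℂ N)
    (sec : Cos (Gamma0 N) → SL(2, ℤ)) (γMN : SL(2, ℤ))
    (bar : Delta M → SL(2, ℤ) → Delta M) (coc : Delta M → SL(2, ℤ) → SL(2, ℤ)) :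
    Matrix (Cos (Gamma0 N) × Delta M) (Cos (Gamma0 N)) ℂ :=
  Matrix.of fun p c =>
    if p.2 = bar (mMat M hM) (sec c) ∧
        p.1 = mkCos (Gamma0 N) (γMN * coc (mMat M hM) (sec c)) then
      conj (cocVal χ sec (γMN * coc (mMat M hM) (sec c)))
    else 0

/-- The inclusion `ι_old : ρ_{χ_M} → T_M ρ_χ`,
`𝔢_γ ↦ M^{-k/2} conj(χ(I_{I₂}(I_{m_M}(γ)))) 𝔢_{I_{m_M}(γ)} ⊗ 𝔢_{m_M·γ}`. -/
def iotaOld {N : ℕ} (M : ℕ) (hM : 0 < M) (k : ℤ) (χ : DirichletCharacter ℂ N)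
    (sec : Cos (Gamma0 N) → SL(2, ℤ)) (secMN : Cos (Gamma0 (M * N)) → SL(2, ℤ))
    (bar : Delta M → SL(2, ℤ) → Delta M) (coc : Delta M → SL(2, ℤ) → SL(2, ℤ)) :
    Matrix (Cos (Gamma0 N) × Delta M) (Cos (Gamma0 (M * N))) ℂ :=
  Matrix.of fun p c =>
    if p.2 = bar (mMat M hM) (secMN c) ∧
        p.1 = mkCos (Gamma0 N) (coc (mMat M hM) (secMN c)) then
      ((((M : ℝ) ^ (-((k : ℝ) / 2)) : ℝ)) : ℂ) *
        conj (cocVal χ sec (coc (mMat M hM) (secMN c)))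
    else 0

/-- The subgroup `Γ₁(N², N) = {γ : c(γ) ≡ 0 mod N², a(γ) ≡ d(γ) ≡ 1 mod N}`. -/
def Gamma1Sq (N : ℕ) : Subgroup SL(2, ℤ) := Gamma0 (N * N) ⊓ Gamma1 N

instance (N : ℕ) [NeZero N] : (Gamma1Sq N).FiniteIndex := by
  unfold Gamma1Sq
  infer_instance

/-- The inclusion `ι_{Γ(N)} : ρ_{Γ(N)} → T_N ρ_{Γ₁(N²,N)}`,
`𝔢_γ ↦ N^{k/2} 𝔢_{I_{m'_N}(γ)} ⊗ 𝔢_{m'_N·γ}`. -/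
def iotaGammaN (N : ℕ) (hN : 0 < N) (k : ℤ)
    (secG : Cos (CongruenceSubgroup.Gamma N) → SL(2, ℤ))
    (bar : Delta N → SL(2, ℤ) → Delta N) (coc : Delta N → SL(2, ℤ) → SL(2, ℤ)) :
    Matrix (Cos (Gamma1Sq N) × Delta N) (Cos (CongruenceSubgroup.Gamma N)) ℂ :=
  Matrix.of fun p c =>
    if p.2 = bar (mMat' N hN) (secG c) ∧
        p.1 = mkCos (Gamma1Sq N) (coc (mMat' N hN) (secG c)) then
      ((((N : ℝ) ^ ((k : ℝ) / 2) : ℝ)) : ℂ)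
    else 0

/-- The inclusion `ι_twist : ρ_{χ'} → T_{M²} ρ_χ`,
`𝔢_γ ↦ M⁻¹ ∑_{b mod M} G(ε, e_M(-b)) conj(χ(I_{I₂}(I_{m_{M,b}}(γ))))
𝔢_{I_{m_{M,b}}(γ)} ⊗ 𝔢_{m_{M,b}·γ}`. -/
def iotaTwist {N : ℕ} (M : ℕ) (χ : DirichletCharacter ℂ N)
    (ε : DirichletCharacter ℂ M)
    (sec : Cos (Gamma0 N) → SL(2, ℤ)) (sec' : Cos (Gamma0 (N * (M * M))) → SL(2, ℤ))
    (bar : Delta (M * M) → SL(2, ℤ) → Delta (M * M))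
    (coc : Delta (M * M) → SL(2, ℤ) → SL(2, ℤ)) :
    Matrix (Cos (Gamma0 N) × Delta (M * M)) (Cos (Gamma0 (N * (M * M)))) ℂ :=
  Matrix.of fun p c =>
    ((M : ℂ))⁻¹ *
      ∑ b : Fin M,
        if p.2 = bar (mMatB M b) (sec' c) ∧
            p.1 = mkCos (Gamma0 N) (coc (mMatB M b) (sec' c)) then
          gaussSumE ε (-(b : ℤ)) * conj (cocVal χ sec (coc (mMatB M b) (sec' c)))
        else 0

/-- The inclusion `ι_id : ρ_χ → T_{M²} ρ_χ`, `𝔢_γ ↦ 𝔢_γ ⊗ 𝔢_{diag(M,M)}`. -/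
def iotaId {N : ℕ} (M : ℕ) (hM : 0 < M) :
    Matrix (Cos (Gamma0 N) × Delta (M * M)) (Cos (Gamma0 N)) ℂ :=
  Matrix.of fun p c => if p.1 = c ∧ p.2 = mMatMM M hM then 1 else 0

end VVMF

open VVMF

/-!
For a representative `γ` of a coset of `Γ₀(MN)`, the Hecke decomposition
`m_M γ = I · m` (`I = I_{m_M}(γ) ∈ SL₂(ℤ)`, `m = (a b; 0 d) ∈ Δ_M`) gives `M(γτ) = I(mτ)`
and `j(I, mτ) = j(γ, τ)/d`. Hence `((sc_M f) ∣_k γ)(τ) = d^{-k} (f ∣_k I)(mτ)`, and since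
`f ∈ M_k(χ)`, writing `I = h β` with `h ∈ Γ₀(N)` and `β` the representative of `Γ₀(N) I`
turns `f ∣_k I` into `χ(I_{I₂}(I))` times the `Γ₀(N) I`-component of `Ind f`. As
`M^{-k/2} (a/d)^{k/2} = d^{-k}`, the `Γ₀(MN) γ`-component of `Ind(sc_M f)` is exactly the
`(Γ₀(N) I, m)`-component of `T_M Ind f` weighted by the only nonzero entry of column `γ` of
`ι_old`: so `Ind(sc_M f) = π_old(T_M Ind f)` pointwise, and the second equality is
adjointness.
-/

namespace VVMF

open UpperHalfPlane

lemma denomZ_eq_denom (γ : SL(2, ℤ)) (τ : ℍ) :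
    denomZ γ τ = denom (γ : GL (Fin 2) ℝ) τ := by
  simp [denomZ, ModularGroup.denom_apply]

lemma denomZ_ne_zero (γ : SL(2, ℤ)) (τ : ℍ) : denomZ γ τ ≠ 0 := by
  rw [denomZ_eq_denom]
  exact denom_ne_zero _ _

lemma denomZ_mul (g h : SL(2, ℤ)) (τ : ℍ) :
    denomZ (g * h) τ = denomZ g (h • τ) * denomZ h τ := by
  simp only [denomZ_eq_denom, map_mul, denom_cocycle_σ]
  simp [σ]

lemma coe_smul_eq_div_denomZ (γ : SL(2, ℤ)) (τ : ℍ) :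
    ((γ • τ : ℍ) : ℂ) = (((γ 0 0 : ℤ) : ℂ) * τ + ((γ 0 1 : ℤ) : ℂ)) / denomZ γ τ := by
  rw [coe_specialLinearGroup_apply]
  simp [denomZ]

lemma DeltaPred.one_one_pos {M : ℕ} {m : GL2ℤ} (hm : DeltaPred M m) : 0 < m 1 1 :=
  hm.2.2.2.1.trans_lt hm.2.2.2.2

lemma DeltaPred.coe_utAct {M : ℕ} {m : GL2ℤ} (hm : DeltaPred M m) (τ : ℍ) :
    ((utAct m τ : ℍ) : ℂ) = (((m 0 0 : ℤ) : ℂ) * τ + ((m 0 1 : ℤ) : ℂ)) / ((m 1 1 : ℤ) : ℂ) := by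
  have hd : (0 : ℝ) < m 1 1 := by exact_mod_cast hm.one_one_pos
  have ha : (0 : ℝ) < m 0 0 := by exact_mod_cast hm.2.1
  have him : 0 < ((((m 0 0 : ℤ) : ℂ) * τ + ((m 0 1 : ℤ) : ℂ)) / ((m 1 1 : ℤ) : ℂ)).im := by
    rw [show ((m 1 1 : ℤ) : ℂ) = ((m 1 1 : ℝ) : ℂ) by simp, Complex.div_ofReal_im]
    simpa using div_pos (mul_pos ha τ.im_pos) hd
  rw [utAct, dif_pos him, coe_mk]

lemma denomZ_utAct_of_mul_eq {M M' : ℕ} {m m' : GL2ℤ} (hm : DeltaPred M m)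
    (hm' : DeltaPred M' m') {I γ : SL(2, ℤ)} (h : (I : GL2ℤ) * m = m' * γ) (τ : ℍ) :
    denomZ I (utAct m τ) = m' 1 1 * denomZ γ τ / m 1 1 := by
  have e10 := congrArg (Int.cast : ℤ → ℂ) (congrFun (congrFun h 1) 0)
  have e11 := congrArg (Int.cast : ℤ → ℂ) (congrFun (congrFun h 1) 1)
  simp only [Matrix.mul_apply, Fin.sum_univ_two, hm.1, hm'.1] at e10 e11
  push_cast at e10 e11
  have hd : ((m 1 1 : ℤ) : ℂ) ≠ 0 := by exact_mod_cast hm.one_one_pos.ne'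
  rw [denomZ, denomZ, hm.coe_utAct]
  field_simp
  linear_combination (τ : ℂ) * e10 + e11

lemma smul_utAct_of_mul_eq {M M' : ℕ} {m m' : GL2ℤ} (hm : DeltaPred M m)
    (hm' : DeltaPred M' m') {I γ : SL(2, ℤ)} (h : (I : GL2ℤ) * m = m' * γ) (τ : ℍ) :
    I • utAct m τ = utAct m' (γ • τ) := by
  have e00 := congrArg (Int.cast : ℤ → ℂ) (congrFun (congrFun h 0) 0)
  have e01 := congrArg (Int.cast : ℤ → ℂ) (congrFun (congrFun h 0) 1)
  simp only [Matrix.mul_apply, Fin.sum_univ_two, hm.1] at e00 e01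
  push_cast at e00 e01
  have hd : ((m 1 1 : ℤ) : ℂ) ≠ 0 := by exact_mod_cast hm.one_one_pos.ne'
  have hd' : ((m' 1 1 : ℤ) : ℂ) ≠ 0 := by exact_mod_cast hm'.one_one_pos.ne'
  have hJ := denomZ_ne_zero γ τ
  have hJ_def : denomZ γ τ = ((γ 1 0 : ℤ) : ℂ) * τ + ((γ 1 1 : ℤ) : ℂ) := rfl
  ext
  rw [coe_smul_eq_div_denomZ, denomZ_utAct_of_mul_eq hm hm' h, hm.coe_utAct, hm'.coe_utAct,
    coe_smul_eq_div_denomZ]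
  field_simp
  linear_combination (τ : ℂ) * e00 + e01 - ((m' 0 1 : ℤ) : ℂ) * hJ_def

lemma IsSection.mul_inv_mem {Γ : Subgroup SL(2, ℤ)} {sec : Cos Γ → SL(2, ℤ)}
    (hsec : IsSection Γ sec) (g : SL(2, ℤ)) : g * (sec (mkCos Γ g))⁻¹ ∈ Γ :=
  QuotientGroup.rightRel_apply.mp (Quotient.exact (hsec.1 (mkCos Γ g)))

lemma cocVal_eq_dirSL {N : ℕ} (χ : DirichletCharacter ℂ N) {sec : Cos (Gamma0 N) → SL(2, ℤ)}
    (hsec : IsSection (Gamma0 N) sec) (g : SL(2, ℤ)) :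
    cocVal χ sec g = dirSL χ (g * (sec (mkCos (Gamma0 N) g))⁻¹) := by
  have hcos : cosMul (Gamma0 N) (mkCos (Gamma0 N) 1) g = mkCos (Gamma0 N) g :=
    congrArg (mkCos (Gamma0 N)) (one_mul g)
  rw [cocVal, indCoc, hsec.2, one_mul, hcos]

lemma dirSL_eq_gamma0Map {N : ℕ} (χ : DirichletCharacter ℂ N) {g : SL(2, ℤ)}
    (hg : g ∈ Gamma0 N) : dirSL χ g = χ (Gamma0Map N ⟨g, hg⟩) :=
  rfl

lemma dirSL_inv_mul_self {N : ℕ} (χ : DirichletCharacter ℂ N) {g : SL(2, ℤ)}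
    (hg : g ∈ Gamma0 N) : dirSL χ g⁻¹ * dirSL χ g = 1 := by
  rw [dirSL_eq_gamma0Map χ (inv_mem hg), dirSL_eq_gamma0Map χ hg, ← map_mul, ← map_mul]
  change χ (Gamma0Map N ((⟨g, hg⟩ : Gamma0 N)⁻¹ * ⟨g, hg⟩)) = 1
  rw [inv_mul_cancel, map_one, map_one]

lemma cslash_mul (k : ℤ) (g h : SL(2, ℤ)) (f : ℍ → ℂ) :
    cslash k (g * h) f = cslash k h (cslash k g f) := by
  funext τ
  simp only [cslash, denomZ_mul, mul_smul, mul_zpow]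
  ring

lemma cslash_const_mul (k : ℤ) (g : SL(2, ℤ)) (c : ℂ) (f : ℍ → ℂ) :
    cslash k g (fun τ => c * f τ) = fun τ => c * cslash k g f τ := by
  funext τ
  simp only [cslash]
  ring

lemma apply_smul_eq_denomZ_zpow_mul_cslash (k : ℤ) (g : SL(2, ℤ)) (f : ℍ → ℂ) (τ : ℍ) :
    f (g • τ) = denomZ g τ ^ k * cslash k g f τ := by
  rw [cslash, ← mul_assoc, ← zpow_add₀ (denomZ_ne_zero g τ), add_neg_cancel, zpow_zero,
    one_mul]

lemma IsModFormChi.cslash_of_mem {N : ℕ} {k : ℤ} {χ : DirichletCharacter ℂ N} {f : ℍ → ℂ}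
    (hf : IsModFormChi k χ f) {g : SL(2, ℤ)} (hg : g ∈ Gamma0 N) :
    cslash k g f = fun τ => dirSL χ g * f τ := by
  funext τ
  calc cslash k g f τ = (dirSL χ g⁻¹ * dirSL χ g) * cslash k g f τ := by
        rw [dirSL_inv_mul_self χ hg, one_mul]
    _ = dirSL χ g * (dirSL χ g⁻¹ * cslash k g f τ) := by ring
    _ = dirSL χ g * f τ := by rw [congrFun (hf.2.1 g hg) τ]

lemma IsModFormChi.cslash_eq_cocVal_mul_indForm {N : ℕ} {k : ℤ}
    {χ : DirichletCharacter ℂ N} {f : ℍ → ℂ} (hf : IsModFormChi k χ f)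
    {sec : Cos (Gamma0 N) → SL(2, ℤ)} (hsec : IsSection (Gamma0 N) sec) (g : SL(2, ℤ))
    (τ : ℍ) :
    cslash k g f τ = cocVal χ sec g * indForm (Gamma0 N) sec k f τ (mkCos (Gamma0 N) g) := by
  have hg : g = (g * (sec (mkCos (Gamma0 N) g))⁻¹) * sec (mkCos (Gamma0 N) g) := by group
  rw [cocVal_eq_dirSL χ hsec, indForm, hg, cslash_mul,
    hf.cslash_of_mem (hsec.mul_inv_mem g), cslash_const_mul, ← hg]

lemma mul_rpow_neg_mul_div_rpow {a d : ℝ} (ha : 0 < a) (hd : 0 < d) (k : ℤ) :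
    (a * d) ^ (-((k : ℝ) / 2)) * (a / d) ^ ((k : ℝ) / 2) = d ^ (-k) := by
  rw [Real.mul_rpow ha.le hd.le, Real.div_rpow ha.le hd.le, Real.rpow_neg ha.le,
    Real.rpow_neg hd.le]
  have hak : a ^ ((k : ℝ) / 2) ≠ 0 := (Real.rpow_pos_of_pos ha _).ne'
  have hdk : d ^ ((k : ℝ) / 2) ≠ 0 := (Real.rpow_pos_of_pos hd _).ne'
  have hsq : d ^ ((k : ℝ) / 2) * d ^ ((k : ℝ) / 2) = d ^ k := by
    rw [← Real.rpow_add hd, add_halves, Real.rpow_intCast]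
  rw [_root_.zpow_neg, ← hsq]
  field_simp

lemma heckeT_apply {ι : Type*} (M : ℕ) (k : ℤ) (F : ℍ → ι → ℂ) (τ : ℍ) (i : ι)
    (m : Delta M) :
    heckeT M k F τ (i, m) =
      (((((m.1 0 0 : ℤ) : ℝ) / ((m.1 1 1 : ℤ) : ℝ)) ^ ((k : ℝ) / 2) : ℝ) : ℂ) *
        F (utAct m.1 τ) i :=
  rfl

lemma pairF_conjTranspose_mulVec {α β : Type*} [Fintype α] [Fintype β] (A : Matrix α β ℂ)
    (x : ℍ → α → ℂ) (v : β → ℂ) :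
    pairF (fun τ => Aᴴ *ᵥ x τ) v = pairF x (A *ᵥ v) := by
  funext τ
  simp only [pairF, Matrix.mulVec, Matrix.conjTranspose_apply, dotProduct, map_sum,
    map_mul, Finset.sum_mul, Finset.mul_sum, RCLike.star_def]
  rw [Finset.sum_comm]
  exact Finset.sum_congr rfl fun a _ => Finset.sum_congr rfl fun b _ => by ring

section Oldforms

variable {N M : ℕ} {hM : 0 < M} {k : ℤ} {χ : DirichletCharacter ℂ N}
  {sec : Cos (Gamma0 N) → SL(2, ℤ)} {secMN : Cos (Gamma0 (M * N)) → SL(2, ℤ)}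
  {bar : Delta M → SL(2, ℤ) → Delta M} {coc : Delta M → SL(2, ℤ) → SL(2, ℤ)} {f : ℍ → ℂ}

lemma cslash_scMul_eq (hf : IsModFormChi k χ f) (hsec : IsSection (Gamma0 N) sec)
    (hd : HeckeData M bar coc) (γ : SL(2, ℤ)) (τ : ℍ) :
    cslash k γ (scMul M f) τ =
      ((((M : ℝ) ^ (-((k : ℝ) / 2)) : ℝ)) : ℂ) * cocVal χ sec (coc (mMat M hM) γ) *
        heckeT M k (indForm (Gamma0 N) sec k f) τ
          (mkCos (Gamma0 N) (coc (mMat M hM) γ), bar (mMat M hM) γ) := by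
  set I := coc (mMat M hM) γ
  set m := (bar (mMat M hM) γ).1
  obtain ⟨-, ha, hdet, -, -⟩ := (bar (mMat M hM) γ).2
  have hm : DeltaPred M m := (bar (mMat M hM) γ).2
  have hI : (I : GL2ℤ) * m = (mMat M hM).1 * γ := hd (mMat M hM) γ
  have hj : denomZ I (utAct m τ) = denomZ γ τ / m 1 1 := by
    rw [denomZ_utAct_of_mul_eq hm (mMat M hM).2 hI]
    simp [mMat]
  have hfac : ((((M : ℝ) ^ (-((k : ℝ) / 2)) * ((m 0 0 : ℝ) / (m 1 1 : ℝ)) ^ ((k : ℝ) / 2) : ℝ))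
      : ℂ) = ((m 1 1 : ℤ) : ℂ) ^ (-k) := by
    rw [show (M : ℝ) = m 0 0 * m 1 1 by exact_mod_cast hdet.symm,
      mul_rpow_neg_mul_div_rpow (by exact_mod_cast ha) (by exact_mod_cast hm.one_one_pos)]
    push_cast
    rfl
  calc cslash k γ (scMul M f) τ = denomZ γ τ ^ (-k) * f (I • utAct m τ) := by
        rw [smul_utAct_of_mul_eq hm (mMat M hM).2 hI]
        rfl
    _ = (denomZ γ τ ^ (-k) * (denomZ γ τ / m 1 1) ^ k) *
          (cocVal χ sec I * indForm (Gamma0 N) sec k f (utAct m τ) (mkCos (Gamma0 N) I)) := by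
        rw [apply_smul_eq_denomZ_zpow_mul_cslash k I f, hj, hf.cslash_eq_cocVal_mul_indForm hsec]
        ring
    _ = ((m 1 1 : ℤ) : ℂ) ^ (-k) *
          (cocVal χ sec I * indForm (Gamma0 N) sec k f (utAct m τ) (mkCos (Gamma0 N) I)) := by
        rw [div_zpow, _root_.zpow_neg, _root_.zpow_neg]
        field_simp [zpow_ne_zero k (denomZ_ne_zero γ τ)]
    _ = _ := by
        rw [heckeT_apply, ← hfac]
        push_cast
        ring

lemma iotaOld_conjTranspose_mulVec_apply [NeZero N] (x : Cos (Gamma0 N) × Delta M → ℂ)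
    (c : Cos (Gamma0 (M * N))) :
    ((iotaOld M hM k χ sec secMN bar coc)ᴴ *ᵥ x) c =
      ((((M : ℝ) ^ (-((k : ℝ) / 2)) : ℝ)) : ℂ) * cocVal χ sec (coc (mMat M hM) (secMN c)) *
        x (mkCos (Gamma0 N) (coc (mMat M hM) (secMN c)), bar (mMat M hM) (secMN c)) := by
  rw [Matrix.mulVec, dotProduct, Finset.sum_eq_single
    (mkCos (Gamma0 N) (coc (mMat M hM) (secMN c)), bar (mMat M hM) (secMN c))]
  · simp [iotaOld]
  · intro p _ hp
    rw [Matrix.conjTranspose_apply, iotaOld, Matrix.of_apply,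
      if_neg fun h => hp (Prod.ext h.2 h.1), star_zero, zero_mul]
  · exact fun h => absurd (Finset.mem_univ _) h

theorem indForm_scMul_eq [NeZero N] (hf : IsModFormChi k χ f)
    (hsec : IsSection (Gamma0 N) sec) (hd : HeckeData M bar coc) :
    indForm (Gamma0 (M * N)) secMN k (scMul M f) =
      fun τ => (iotaOld M hM k χ sec secMN bar coc)ᴴ *ᵥ
        heckeT M k (indForm (Gamma0 N) sec k f) τ := by
  funext τ c
  rw [iotaOld_conjTranspose_mulVec_apply]
  exact cslash_scMul_eq hf hsec hd (secMN c) τ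

end Oldforms

end VVMF

theorem oldform_from_vector_valued_general {N : ℕ} [NeZero N] (M : ℕ) (hM : 0 < M) [NeZero M]
    (k : ℤ) (χ : DirichletCharacter ℂ N)
    (sec : Cos (Gamma0 N) → SL(2, ℤ)) (hsec : IsSection (Gamma0 N) sec)
    (secMN : Cos (Gamma0 (M * N)) → SL(2, ℤ))
    (bar : Delta M → SL(2, ℤ) → Delta M) (coc : Delta M → SL(2, ℤ) → SL(2, ℤ))
    (hd : HeckeData M bar coc)
    (f : ℍ → ℂ) (hf : IsModFormChi k χ f) (v : Cos (Gamma0 (M * N)) → ℂ) :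
    pairF (indForm (Gamma0 (M * N)) secMN k (scMul M f)) v =
      pairF (fun τ => (iotaOld M hM k χ sec secMN bar coc)ᴴ.mulVec
        (heckeT M k (indForm (Gamma0 N) sec k f) τ)) v ∧
    pairF (indForm (Gamma0 (M * N)) secMN k (scMul M f)) v =
      pairF (heckeT M k (indForm (Gamma0 N) sec k f))
        ((iotaOld M hM k χ sec secMN bar coc).mulVec v) := by
  rw [indForm_scMul_eq (hM := hM) (secMN := secMN) hf hsec hd]
  exact ⟨rfl, pairF_conjTranspose_mulVec _ _ _⟩

/-- The inclusion `ι_old` and its adjoint projection `π_old = ι_oldᴴ`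
intertwine the oldform map `(sc_M f)(τ) = f(Mτ)` and the vector-valued Hecke operator
with the induction map (the induction of `sc_M f` being formed with respect to
`Γ₀(MN)` and the mod `MN` character `χ_M` defined by `χ`): for `f ∈ M_k(χ)` and
`v ∈ V(ρ_{χ_M})`,
`⟨Ind(sc_M f), v⟩ = ⟨π_old(T_M Ind f), v⟩ = ⟨T_M Ind f, ι_old v⟩`. -/
theorem oldform_from_vector_valued {N : ℕ} [NeZero N] (M : ℕ) (hM : 0 < M) [NeZero M]
    (k : ℤ) (χ : DirichletCharacter ℂ N)
    (χM : DirichletCharacter ℂ (M * N))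
    (hχM : χM = DirichletCharacter.changeLevel (dvd_mul_left N M) χ)
    (sec : Cos (Gamma0 N) → SL(2, ℤ)) (hsec : IsSection (Gamma0 N) sec)
    (secMN : Cos (Gamma0 (M * N)) → SL(2, ℤ)) (hsecMN : IsSection (Gamma0 (M * N)) secMN)
    (bar : Delta M → SL(2, ℤ) → Delta M) (coc : Delta M → SL(2, ℤ) → SL(2, ℤ))
    (hd : HeckeData M bar coc)
    (f : ℍ → ℂ) (hf : IsModFormChi k χ f) (v : Cos (Gamma0 (M * N)) → ℂ) :
    pairF (indForm (Gamma0 (M * N)) secMN k (scMul M f)) v =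
      pairF (fun τ => (iotaOld M hM k χ sec secMN bar coc)ᴴ.mulVec
        (heckeT M k (indForm (Gamma0 N) sec k f) τ)) v ∧
    pairF (indForm (Gamma0 (M * N)) secMN k (scMul M f)) v =
      pairF (heckeT M k (indForm (Gamma0 N) sec k f))
        ((iotaOld M hM k χ sec secMN bar coc).mulVec v) :=
  oldform_from_vector_valued_general M hM k χ sec hsec secMN bar coc hd f hf v
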